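/- There exist constants C > 0 and delta_0 > 0 depending only on w such that for every delta in (0, delta_0], every unit vector n in R^2, and every square-summable family (f^(xi))_{xi in Z^2, xi ≠ 0} of vectors in C^2, the following holds for each xi ≠ 0 (writing lambda := lambda_delta^n(xi), which is nonzero): the linear system |lambda|^2 u^(xi) + lambda p^(xi) = f^(xi), conj(lambda)^T u^(xi) = 0 (with unknowns u^(xi) in C^2 and p^(xi) in C) has the unique solution u^(xi) = |lambda|^{-2} ( I_2 - lambda conj(lambda)^T / |lambda|^2 ) f^(xi) and p^(xi) = conj(lambda)^T f^(xi) / |lambda|^2; moreover Sum_{xi ≠ 0} ( |lambda_delta^n(xi)|^2 |u^(xi)|^2 + |p^(xi)|^2 ) <= C Sum_{xi ≠ 0} |lambda_delta^n(xi)|^{-2} |f^(xi)|^2. -/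

import Mathlib

open MeasureTheory Real Set
open scoped BigOperators Pointwise

noncomputable section

/-- The scaled kernel `w_δ(r) = δ^{-3} w(r/δ)` (dimension 2). -/
def wS (w : ℝ → ℝ) (δ r : ℝ) : ℝ := w (r / δ) / δ ^ 3

/-- The half space `H_n = {z : z ⬝ n ≥ 0}`. -/
def halfSp (n : EuclideanSpace ℝ (Fin 2)) : Set (EuclideanSpace ℝ (Fin 2)) :=
  {z | 0 ≤ ∑ i, z i * n i}

/-- `i`-th component of the Fourier symbol `λ_δ^n(ξ)`. -/
def symb (w : ℝ → ℝ) (δ : ℝ) (n : EuclideanSpace ℝ (Fin 2)) (ξ : Fin 2 → ℤ) (i : Fin 2) : ℂ :=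
  2 * ∫ s in halfSp n, ((wS w δ ‖s‖ * s i / ‖s‖ : ℝ) : ℂ) *
      (Complex.exp (Complex.I * (∑ j, (ξ j : ℝ) * s j)) - 1)

/-- `|λ_δ^n(ξ)|²`. -/
def lamSq (w : ℝ → ℝ) (δ : ℝ) (n : EuclideanSpace ℝ (Fin 2)) (ξ : Fin 2 → ℤ) : ℝ :=
  ∑ i, Complex.normSq (symb w δ n ξ i)

/-- `conj(λ)ᵀ f = ⟨λ, f⟩`. -/
def cdot (a b : Fin 2 → ℂ) : ℂ := ∑ i, (starRingEnd ℂ) (a i) * b i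

/-- The explicit velocity solution `u^(ξ) = |λ|⁻² (I - λ conj(λ)ᵀ/|λ|²) f^(ξ)`. -/
def stokesU (w : ℝ → ℝ) (δ : ℝ) (n : EuclideanSpace ℝ (Fin 2)) (ξ : Fin 2 → ℤ)
    (fv : Fin 2 → ℂ) (i : Fin 2) : ℂ :=
  ((lamSq w δ n ξ : ℝ) : ℂ)⁻¹ *
    (fv i - cdot (symb w δ n ξ) fv / ((lamSq w δ n ξ : ℝ) : ℂ) * symb w δ n ξ i)

/-- The explicit pressure solution `p^(ξ) = conj(λ)ᵀ f^(ξ) / |λ|²`. -/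
def stokesP (w : ℝ → ℝ) (δ : ℝ) (n : EuclideanSpace ℝ (Fin 2)) (ξ : Fin 2 → ℤ)
    (fv : Fin 2 → ℂ) : ℂ :=
  cdot (symb w δ n ξ) fv / ((lamSq w δ n ξ : ℝ) : ℂ)

/-! ### Auxiliary material -/

abbrev E2 := EuclideanSpace ℝ (Fin 2)

/-- The angle `θ_ξ(s) = ξ ⬝ s`. -/
def thet (ξ : Fin 2 → ℤ) (s : E2) : ℝ := ∑ j, (ξ j : ℝ) * s j

/-- The complex integrand in `symb`. -/
def gC (w : ℝ → ℝ) (δ : ℝ) (ξ : Fin 2 → ℤ) (i : Fin 2) (s : E2) : ℂ :=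
  ((wS w δ ‖s‖ * s i / ‖s‖ : ℝ) : ℂ) * (Complex.exp (Complex.I * (thet ξ s : ℝ)) - 1)

/-- The real part of the integrand. -/
def fR (w : ℝ → ℝ) (δ : ℝ) (ξ : Fin 2 → ℤ) (i : Fin 2) (s : E2) : ℝ :=
  wS w δ ‖s‖ * s i / ‖s‖ * (Real.cos (thet ξ s) - 1)

/-- The normal combination of the real parts. -/
def fN (w : ℝ → ℝ) (δ : ℝ) (n : E2) (ξ : Fin 2 → ℤ) (s : E2) : ℝ :=
  wS w δ ‖s‖ * (∑ i, s i * n i) / ‖s‖ * (Real.cos (thet ξ s) - 1)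

lemma symb_eq (w : ℝ → ℝ) (δ : ℝ) (n : E2) (ξ : Fin 2 → ℤ) (i : Fin 2) :
    symb w δ n ξ i = 2 * ∫ s in halfSp n, gC w δ ξ i s := rfl

lemma measurable_thet (ξ : Fin 2 → ℤ) : Measurable (thet ξ) :=
  Finset.measurable_sum _ fun j _ => ((measurable_pi_apply j).comp (WithLp.measurable_ofLp _ _)).const_mul _

lemma measurable_wS {w : ℝ → ℝ} {δ : ℝ} (hwmeas : Measurable w) :
    Measurable (fun s : E2 => wS w δ ‖s‖) :=
  (hwmeas.comp (measurable_norm.div_const δ)).div_const _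

lemma measurable_gC {w : ℝ → ℝ} {δ : ℝ} (ξ : Fin 2 → ℤ) (hwmeas : Measurable w) (i : Fin 2) :
    Measurable (gC w δ ξ i) := by
  apply Measurable.mul
  · exact Complex.measurable_ofReal.comp
      (((measurable_wS hwmeas).mul ((measurable_pi_apply i).comp (WithLp.measurable_ofLp _ _))).div measurable_norm)
  · exact ((Complex.measurable_exp.comp
      ((Complex.measurable_ofReal.comp (measurable_thet ξ)).const_mul _)).sub measurable_const)

lemma abs_coord_le (s : E2) (i : Fin 2) : |s i| ≤ ‖s‖ := by
  rw [EuclideanSpace.norm_eq, ← Real.sqrt_sq_eq_abs]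
  apply Real.sqrt_le_sqrt
  simpa using Finset.single_le_sum (f := fun j => ‖s j‖ ^ 2) (fun j _ => sq_nonneg _)
    (Finset.mem_univ i)

lemma norm_exp_I_sub_one (θ : ℝ) : ‖Complex.exp (Complex.I * θ) - 1‖ ≤ |θ| := by
  have h1 : Complex.exp (Complex.I * θ) = Complex.exp (θ * Complex.I) := by rw [mul_comm]
  have hre : (Complex.exp (Complex.I * θ) - 1).re = Real.cos θ - 1 := by
    simp [h1, Complex.exp_ofReal_mul_I_re]
  have him : (Complex.exp (Complex.I * θ) - 1).im = Real.sin θ := by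
    simp [h1, Complex.exp_ofReal_mul_I_im]
  have hsq : ‖Complex.exp (Complex.I * θ) - 1‖ ^ 2 = 2 - 2 * Real.cos θ := by
    rw [Complex.sq_norm, Complex.normSq_apply, hre, him]
    nlinarith [Real.sin_sq_add_cos_sq θ]
  have hcos := Real.one_sub_sq_div_two_le_cos (x := θ)
  nlinarith [norm_nonneg (Complex.exp (Complex.I * θ) - 1), abs_nonneg θ, sq_abs θ]

lemma integW {w : ℝ → ℝ} (hmom : (∫ x : E2, w ‖x‖ * ‖x‖) = 2) :
    Integrable (fun x : E2 => w ‖x‖ * ‖x‖) := by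
  by_contra h
  rw [integral_undef h] at hmom
  norm_num at hmom

lemma integWd {w : ℝ → ℝ} {δ : ℝ} (hδ : 0 < δ)
    (hI : Integrable (fun x : E2 => w ‖x‖ * ‖x‖)) :
    Integrable (fun s : E2 => wS w δ ‖s‖ * ‖s‖) := by
  have h1 : Integrable (fun s : E2 => (fun x : E2 => w ‖x‖ * ‖x‖) (δ⁻¹ • s)) :=
    hI.comp_smul (inv_ne_zero hδ.ne')
  apply (h1.const_mul (δ⁻¹ * δ⁻¹)).congr
  apply Filter.Eventually.of_forall
  intro s
  have hn : ‖δ⁻¹ • s‖ = ‖s‖ / δ := by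
    rw [norm_smul, Real.norm_eq_abs, abs_inv, abs_of_pos hδ, inv_mul_eq_div]
  simp only [hn, wS]
  ring

lemma norm_gC_le {w : ℝ → ℝ} {δ : ℝ} (ξ : Fin 2 → ℤ) (hwnn : ∀ r, 0 ≤ w r) (hδ : 0 < δ)
    (i : Fin 2) (s : E2) :
    ‖gC w δ ξ i s‖ ≤ (∑ j, |(ξ j : ℝ)|) * (wS w δ ‖s‖ * ‖s‖) := by
  have hwSnn : 0 ≤ wS w δ ‖s‖ := div_nonneg (hwnn _) (by positivity)
  rw [gC, norm_mul]
  have h1 : ‖((wS w δ ‖s‖ * s i / ‖s‖ : ℝ) : ℂ)‖ ≤ wS w δ ‖s‖ := by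
    rw [Complex.norm_real, Real.norm_eq_abs, abs_div, abs_mul, abs_of_nonneg hwSnn]
    rcases eq_or_ne s 0 with rfl | hs
    · simp only [norm_zero]
      simpa [wS] using div_nonneg (hwnn _) (by positivity : (0:ℝ) ≤ δ^3)
    · rw [abs_norm, div_le_iff₀ (norm_pos_iff.mpr hs)]
      exact mul_le_mul_of_nonneg_left (abs_coord_le s i) hwSnn
  have h2 : ‖Complex.exp (Complex.I * (thet ξ s : ℝ)) - 1‖ ≤ (∑ j, |(ξ j : ℝ)|) * ‖s‖ := by
    refine (norm_exp_I_sub_one _).trans ?_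
    rw [thet]
    calc |∑ j, (ξ j : ℝ) * s j| ≤ ∑ j, |(ξ j : ℝ) * s j| := Finset.abs_sum_le_sum_abs _ _
      _ ≤ ∑ j, |(ξ j : ℝ)| * ‖s‖ := by
          apply Finset.sum_le_sum
          intro j _
          rw [abs_mul]
          exact mul_le_mul_of_nonneg_left (abs_coord_le s j) (abs_nonneg _)
      _ = (∑ j, |(ξ j : ℝ)|) * ‖s‖ := by rw [← Finset.sum_mul]
  calc ‖((wS w δ ‖s‖ * s i / ‖s‖ : ℝ) : ℂ)‖ * ‖Complex.exp (Complex.I * (thet ξ s : ℝ)) - 1‖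
      ≤ wS w δ ‖s‖ * ((∑ j, |(ξ j : ℝ)|) * ‖s‖) :=
        mul_le_mul h1 h2 (norm_nonneg _) hwSnn
    _ = (∑ j, |(ξ j : ℝ)|) * (wS w δ ‖s‖ * ‖s‖) := by ring

lemma integ_gC {w : ℝ → ℝ} {δ : ℝ} (n : E2) (ξ : Fin 2 → ℤ) (hwmeas : Measurable w)
    (hwnn : ∀ r, 0 ≤ w r) (hδ : 0 < δ)
    (hI : Integrable (fun x : E2 => w ‖x‖ * ‖x‖)) (i : Fin 2) :
    IntegrableOn (gC w δ ξ i) (halfSp n) := by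
  apply Integrable.mono' (((integWd hδ hI).const_mul (∑ j, |(ξ j : ℝ)|)).integrableOn)
  · exact ((measurable_gC ξ hwmeas i).aestronglyMeasurable).restrict
  · exact Filter.Eventually.of_forall fun s => norm_gC_le ξ hwnn hδ i s

lemma gC_re {w : ℝ → ℝ} {δ : ℝ} (ξ : Fin 2 → ℤ) (i : Fin 2) (s : E2) :
    (gC w δ ξ i s).re = fR w δ ξ i s := by
  rw [gC, fR, Complex.re_ofReal_mul]
  congr 1
  rw [Complex.sub_re, mul_comm Complex.I]
  simp [Complex.exp_ofReal_mul_I_re]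

lemma symb_re {w : ℝ → ℝ} {δ : ℝ} (n : E2) (ξ : Fin 2 → ℤ) (hwmeas : Measurable w)
    (hwnn : ∀ r, 0 ≤ w r) (hδ : 0 < δ)
    (hI : Integrable (fun x : E2 => w ‖x‖ * ‖x‖)) (i : Fin 2) :
    (symb w δ n ξ i).re = 2 * ∫ s in halfSp n, fR w δ ξ i s := by
  have h1 : symb w δ n ξ i = ((2:ℝ):ℂ) * ∫ s in halfSp n, gC w δ ξ i s := by
    rw [symb_eq]; norm_num
  rw [h1, Complex.re_ofReal_mul]
  congr 1
  calc (∫ s in halfSp n, gC w δ ξ i s).re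
      = ∫ s in halfSp n, (gC w δ ξ i s).re :=
        (integral_re (integ_gC n ξ hwmeas hwnn hδ hI i)).symm
    _ = ∫ s in halfSp n, fR w δ ξ i s :=
        integral_congr_ae (Filter.Eventually.of_forall fun s => gC_re ξ i s)

lemma integ_fR {w : ℝ → ℝ} {δ : ℝ} (n : E2) (ξ : Fin 2 → ℤ) (hwmeas : Measurable w)
    (hwnn : ∀ r, 0 ≤ w r) (hδ : 0 < δ)
    (hI : Integrable (fun x : E2 => w ‖x‖ * ‖x‖)) (i : Fin 2) :
    IntegrableOn (fR w δ ξ i) (halfSp n) := by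
  apply ((integ_gC n ξ hwmeas hwnn hδ hI i).re).congr
  exact Filter.Eventually.of_forall fun s => gC_re ξ i s

lemma fN_eq {w : ℝ → ℝ} {δ : ℝ} (n : E2) (ξ : Fin 2 → ℤ) (s : E2) :
    fN w δ n ξ s = ∑ i, n i * fR w δ ξ i s := by
  simp only [fN, fR, Fin.sum_univ_two]
  ring

lemma measurableSet_halfSp (n : E2) : MeasurableSet (halfSp n) :=
  measurableSet_le measurable_const (Finset.measurable_sum _ fun i _ =>
    ((measurable_pi_apply i).comp (WithLp.measurable_ofLp _ _)).mul_const _)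

/-- A hyperplane (level set of a nonzero linear functional) is null. -/
lemma null_hyperplane (v : Fin 2 → ℝ) (hv : v ≠ 0) (c : ℝ) :
    volume {s : E2 | ∑ i, v i * s i = c} = 0 := by
  obtain ⟨j, hj⟩ : ∃ j, v j ≠ 0 := by
    by_contra h
    push_neg at h
    exact hv (funext h)
  set L : E2 →ₗ[ℝ] ℝ :=
    { toFun := fun s => ∑ i, v i * s i
      map_add' := fun x y => by
        simp only [PiLp.add_apply, mul_add]
        rw [Finset.sum_add_distrib]
      map_smul' := fun c x => by
        simp only [PiLp.smul_apply, smul_eq_mul, RingHom.id_apply, Finset.mul_sum]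
        congr 1; funext i; ring } with hL
  set s₀ : E2 := EuclideanSpace.single j (c / v j) with hs₀
  have hLs₀ : L s₀ = c := by
    simp only [hL, LinearMap.coe_mk, AddHom.coe_mk, hs₀, EuclideanSpace.single_apply]
    rw [Finset.sum_eq_single j]
    · rw [if_pos rfl]; field_simp
    · intro b _ hb; simp [hb]
    · simp
  have hker : volume ((LinearMap.ker L : Submodule ℝ E2) : Set E2) = 0 := by
    apply Measure.addHaar_submodule
    intro h
    have h2 : L (EuclideanSpace.single j (1:ℝ)) = v j := by
      simp only [hL, LinearMap.coe_mk, AddHom.coe_mk, EuclideanSpace.single_apply]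
      rw [Finset.sum_eq_single j]
      · simp
      · intro b _ hb; simp [hb]
      · simp
    have h3 : EuclideanSpace.single j (1:ℝ) ∈ LinearMap.ker L := by
      rw [h]; trivial
    rw [LinearMap.mem_ker, h2] at h3
    exact hj h3
  have hset : {s : E2 | ∑ i, v i * s i = c}
      = (fun s : E2 => s + (-s₀)) ⁻¹' ((LinearMap.ker L : Submodule ℝ E2) : Set E2) := by
    ext s
    simp only [mem_setOf_eq, mem_preimage, SetLike.mem_coe, LinearMap.mem_ker, map_add,
      map_neg, hLs₀]
    constructor
    · intro h
      have : L s = c := h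
      rw [this]; ring
    · intro h
      have h2 : L s = c := by
        have : L s - c = 0 := by linarith [h]
        linarith
      exact h2
  rw [hset, measure_preimage_add_right]
  exact hker

lemma null_N {n : E2} (hn : ‖n‖ = 1) : volume {s : E2 | ∑ i, s i * n i = 0} = 0 := by
  have hv : (fun i => n i) ≠ (0 : Fin 2 → ℝ) := by
    intro h
    have hn0 : n = 0 := by ext i; exact congrFun h i
    rw [hn0] at hn
    simp at hn
  have h := null_hyperplane (fun i => n i) hv 0
  convert h using 2
  ext s
  simp only [mem_setOf_eq]
  constructor <;> intro h' <;>
    · rw [← h']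
      exact Finset.sum_congr rfl fun i _ => mul_comm _ _

lemma null_cos {ξ : Fin 2 → ℤ} (hξ : ξ ≠ 0) :
    volume {s : E2 | Real.cos (thet ξ s) = 1} = 0 := by
  have hv : (fun j => ((ξ j : ℝ))) ≠ (0 : Fin 2 → ℝ) := by
    intro h
    apply hξ
    ext j
    have := congrFun h j
    simpa using this
  refine measure_mono_null ?_
    (measure_iUnion_null (s := fun k : ℤ => {s : E2 | ∑ j, (ξ j : ℝ) * s j = (k : ℝ) * (2 * π)})
      fun k => null_hyperplane _ hv _)
  intro s hs
  simp only [mem_setOf_eq, thet] at hs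
  obtain ⟨k, hk⟩ := (Real.cos_eq_one_iff _).1 hs
  exact mem_iUnion.2 ⟨k, hk.symm ▸ rfl⟩

lemma posA1 {w : ℝ → ℝ} (hwnn : ∀ r, 0 ≤ w r)
    (hmom : (∫ x : E2, w ‖x‖ * ‖x‖) = 2) :
    0 < volume {x : E2 | 0 < w ‖x‖} := by
  by_contra h
  push_neg at h
  have h0 : volume {x : E2 | 0 < w ‖x‖} = 0 := le_antisymm h zero_le
  have hae : (fun x : E2 => w ‖x‖ * ‖x‖) =ᵐ[volume] (fun _ => (0:ℝ)) := by
    rw [Filter.EventuallyEq, ae_iff]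
    apply measure_mono_null _ h0
    intro x hx
    simp only [mem_setOf_eq] at hx ⊢
    have hw : w ‖x‖ ≠ 0 := fun h' => hx (by rw [h']; ring)
    exact lt_of_le_of_ne (hwnn _) (Ne.symm hw)
  rw [integral_congr_ae hae] at hmom
  simp at hmom

lemma posA {w : ℝ → ℝ} {δ : ℝ} (hδ : 0 < δ) (hwnn : ∀ r, 0 ≤ w r)
    (hmom : (∫ x : E2, w ‖x‖ * ‖x‖) = 2) :
    0 < volume {s : E2 | 0 < w (‖s‖ / δ)} := by
  have hA1 := posA1 hwnn hmom
  have hset : {s : E2 | 0 < w (‖s‖ / δ)} = (δ • {x : E2 | 0 < w ‖x‖} : Set E2) := by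
    ext s
    rw [mem_smul_set_iff_inv_smul_mem₀ hδ.ne']
    simp only [mem_setOf_eq]
    have hns : ‖δ⁻¹ • s‖ = ‖s‖ / δ := by
      rw [norm_smul, Real.norm_eq_abs, abs_inv, abs_of_pos hδ, inv_mul_eq_div]
    rw [hns]
  rw [hset, Measure.addHaar_smul, finrank_euclideanSpace_fin]
  apply ENNReal.mul_pos _ hA1.ne'
  simp only [ne_eq, ENNReal.ofReal_eq_zero, not_le, abs_pos]
  positivity

lemma posAB {w : ℝ → ℝ} {δ : ℝ} {n : E2} (hn : ‖n‖ = 1)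
    (hA : 0 < volume {s : E2 | 0 < w (‖s‖ / δ)}) :
    0 < volume ({s : E2 | 0 < w (‖s‖ / δ)} ∩ {s : E2 | 0 < ∑ i, s i * n i}) := by
  set A := {s : E2 | 0 < w (‖s‖ / δ)}
  set B := {s : E2 | 0 < ∑ i, s i * n i}
  by_contra h
  push_neg at h
  have h0 : volume (A ∩ B) = 0 := le_antisymm h zero_le
  have hsub : A ⊆ (A ∩ B) ∪ (-(A ∩ B)) ∪ {s : E2 | ∑ i, s i * n i = 0} := by
    intro s hs
    rcases lt_trichotomy (∑ i, s i * n i) 0 with hlt | heq | hgt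
    · left; right
      rw [Set.mem_neg]
      constructor
      · show 0 < w (‖-s‖ / δ)
        rwa [norm_neg]
      · show 0 < ∑ i, (-s) i * n i
        have hneg : ∀ i, (-s) i = -(s i) := fun i => rfl
        simp only [hneg, neg_mul]
        rw [Finset.sum_neg_distrib]
        linarith
    · right; exact heq
    · left; left; exact ⟨hs, hgt⟩
  have hneg : volume (-(A ∩ B)) = volume (A ∩ B) := Measure.measure_neg volume _
  have hle := measure_mono (μ := (volume : Measure E2)) hsub
  have hle2 : volume ((A ∩ B) ∪ (-(A ∩ B)) ∪ {s : E2 | ∑ i, s i * n i = 0})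
      ≤ volume (A ∩ B) + volume (-(A ∩ B)) + volume {s : E2 | ∑ i, s i * n i = 0} :=
    le_trans (measure_union_le _ _) (add_le_add (measure_union_le _ _) le_rfl)
  rw [h0, hneg, h0, null_N hn] at hle2
  simp only [add_zero, zero_add] at hle2
  exact absurd (le_trans hle hle2) (by simpa using hA.ne')

lemma T_neg {w : ℝ → ℝ} {δ : ℝ} {n : E2} {ξ : Fin 2 → ℤ} (hwmeas : Measurable w)
    (hwnn : ∀ r, 0 ≤ w r) (hδ : 0 < δ) (hmom : (∫ x : E2, w ‖x‖ * ‖x‖) = 2)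
    (hn : ‖n‖ = 1) (hξ : ξ ≠ 0) :
    (∫ s in halfSp n, fN w δ n ξ s) < 0 := by
  have hI := integW hmom
  set G : E2 → ℝ := fun s => wS w δ ‖s‖ * (∑ i, s i * n i) / ‖s‖ * (1 - Real.cos (thet ξ s))
    with hG
  have hGneg : ∀ s, fN w δ n ξ s = -G s := fun s => by
    simp only [fN, hG]; ring
  have hfNint : IntegrableOn (fN w δ n ξ) (halfSp n) := by
    have h1 : IntegrableOn (fun s => ∑ i, n i * fR w δ ξ i s) (halfSp n) :=
      integrable_finset_sum _ fun i _ => ((integ_fR n ξ hwmeas hwnn hδ hI i).const_mul (n i))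
    exact h1.congr (Filter.Eventually.of_forall fun s => (fN_eq n ξ s).symm)
  have hGint : IntegrableOn G (halfSp n) := by
    apply hfNint.neg.congr
    exact Filter.Eventually.of_forall fun s => by
      simp only [Pi.neg_apply]
      rw [hGneg s, neg_neg]
  have hGnonneg : 0 ≤ᵐ[volume.restrict (halfSp n)] G := by
    have : ∀ᵐ s ∂(volume.restrict (halfSp n)), 0 ≤ G s := by
      refine (ae_restrict_iff' (measurableSet_halfSp n)).2 (ae_of_all _ fun s hs => ?_)
      have h1 : 0 ≤ wS w δ ‖s‖ := div_nonneg (hwnn _) (by positivity)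
      have h2 : 0 ≤ ∑ i, s i * n i := hs
      have h3 : Real.cos (thet ξ s) ≤ 1 := Real.cos_le_one _
      have h4 : 0 ≤ wS w δ ‖s‖ * (∑ i, s i * n i) / ‖s‖ :=
        div_nonneg (mul_nonneg h1 h2) (norm_nonneg s)
      exact mul_nonneg h4 (by linarith)
    exact this
  have hpos : 0 < ∫ s in halfSp n, G s := by
    rw [setIntegral_pos_iff_support_of_nonneg_ae hGnonneg hGint]
    have hS : (({s : E2 | 0 < w (‖s‖/δ)} ∩ {s : E2 | 0 < ∑ i, s i * n i})
        \ {s : E2 | Real.cos (thet ξ s) = 1}) ⊆ Function.support G ∩ halfSp n := by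
      rintro s ⟨⟨hA, hB⟩, hC⟩
      simp only [mem_setOf_eq] at hA hB hC
      constructor
      · have hwS : 0 < wS w δ ‖s‖ := div_pos hA (by positivity)
        have hs0 : s ≠ 0 := by
          intro h
          rw [h] at hB
          simp at hB
        have hns : 0 < ‖s‖ := norm_pos_iff.mpr hs0
        have hc : Real.cos (thet ξ s) < 1 := lt_of_le_of_ne (Real.cos_le_one _) hC
        have hpos : 0 < G s := by
          apply mul_pos (div_pos (mul_pos hwS hB) hns)
          linarith
        exact Function.mem_support.2 hpos.ne'
      · exact le_of_lt hB
    refine lt_of_lt_of_le ?_ (measure_mono hS)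
    rw [measure_diff_null (null_cos hξ)]
    exact posAB hn (posA hδ hwnn hmom)
  have heq : (∫ s in halfSp n, fN w δ n ξ s) = - ∫ s in halfSp n, G s := by
    rw [← integral_neg]
    exact integral_congr_ae (Filter.Eventually.of_forall fun s => hGneg s)
  rw [heq]
  linarith

lemma lamSq_ne_zero {w : ℝ → ℝ} {δ : ℝ} {n : E2} {ξ : Fin 2 → ℤ} (hwmeas : Measurable w)
    (hwnn : ∀ r, 0 ≤ w r) (hδ : 0 < δ) (hmom : (∫ x : E2, w ‖x‖ * ‖x‖) = 2)
    (hn : ‖n‖ = 1) (hξ : ξ ≠ 0) :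
    lamSq w δ n ξ ≠ 0 := by
  have hI := integW hmom
  intro h
  have hsymb : ∀ i, symb w δ n ξ i = 0 := by
    intro i
    have h2 := (Finset.sum_eq_zero_iff_of_nonneg
      (fun j _ => Complex.normSq_nonneg (symb w δ n ξ j))).1 h i (Finset.mem_univ i)
    exact Complex.normSq_eq_zero.1 h2
  have hfR : ∀ i, (∫ s in halfSp n, fR w δ ξ i s) = 0 := by
    intro i
    have h2 := congrArg Complex.re (hsymb i)
    rw [symb_re n ξ hwmeas hwnn hδ hI i] at h2
    simp only [Complex.zero_re] at h2
    linarith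
  have hT := T_neg hwmeas hwnn hδ hmom hn hξ
  have heq : (∫ s in halfSp n, fN w δ n ξ s)
      = ∑ i, n i * ∫ s in halfSp n, fR w δ ξ i s := by
    rw [integral_congr_ae (Filter.Eventually.of_forall fun s => fN_eq n ξ s)]
    rw [integral_finset_sum _ (fun i _ => ((integ_fR n ξ hwmeas hwnn hδ hI i).const_mul (n i)))]
    exact Finset.sum_congr rfl fun i _ => integral_const_mul _ _
  rw [heq] at hT
  simp [hfR] at hT

/-! ### Algebraic part -/

lemma cdot_symb_self (w : ℝ → ℝ) (δ : ℝ) (n : E2) (ξ : Fin 2 → ℤ) :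
    cdot (symb w δ n ξ) (symb w δ n ξ) = ((lamSq w δ n ξ : ℝ) : ℂ) := by
  rw [cdot, lamSq]
  push_cast
  exact Finset.sum_congr rfl fun i _ => by
    rw [mul_comm, Complex.mul_conj]

/-- well-posedness of the Fourier-side steady nonlocal Stokes system,
with the explicit unique solution and the uniform energy estimate. -/
theorem nonlocal_stokes_wellposed
    (w : ℝ → ℝ) (hwmeas : Measurable w) (hwnn : ∀ r, 0 ≤ w r)
    (hwsupp : ∀ r, 1 < r → w r = 0)
    (hmom : (∫ x : EuclideanSpace ℝ (Fin 2), w ‖x‖ * ‖x‖) = 2) :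
    ∃ C > (0 : ℝ), ∃ δ₀ > (0 : ℝ),
      ∀ (n : EuclideanSpace ℝ (Fin 2)), ‖n‖ = 1 → ∀ δ : ℝ, 0 < δ → δ ≤ δ₀ →
        ∀ f : (Fin 2 → ℤ) → Fin 2 → ℂ,
          Summable (fun ξ : {ξ : Fin 2 → ℤ // ξ ≠ 0} => ∑ i, Complex.normSq (f ξ.1 i)) →
          (∀ ξ : Fin 2 → ℤ, ξ ≠ 0 →
            lamSq w δ n ξ ≠ 0 ∧
            ∀ (uv : Fin 2 → ℂ) (pv : ℂ),
              ((∀ i, ((lamSq w δ n ξ : ℝ) : ℂ) * uv i + symb w δ n ξ i * pv = f ξ i) ∧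
                cdot (symb w δ n ξ) uv = 0)
              ↔ (uv = stokesU w δ n ξ (f ξ) ∧ pv = stokesP w δ n ξ (f ξ))) ∧
          (∑' ξ : {ξ : Fin 2 → ℤ // ξ ≠ 0},
              (lamSq w δ n ξ.1 * ∑ i, Complex.normSq (stokesU w δ n ξ.1 (f ξ.1) i)
                + Complex.normSq (stokesP w δ n ξ.1 (f ξ.1))))
            ≤ C * ∑' ξ : {ξ : Fin 2 → ℤ // ξ ≠ 0},
                (lamSq w δ n ξ.1)⁻¹ * ∑ i, Complex.normSq (f ξ.1 i) := by
  refine ⟨2, by norm_num, 1, by norm_num, fun n hn δ hδ hδ₀ f hsum => ?_⟩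
  -- basic facts
  have hlam : ∀ ξ : Fin 2 → ℤ, ξ ≠ 0 → lamSq w δ n ξ ≠ 0 :=
    fun ξ hξ => lamSq_ne_zero hwmeas hwnn hδ hmom hn hξ
  -- the iff
  have hiff : ∀ ξ : Fin 2 → ℤ, ξ ≠ 0 → ∀ (uv : Fin 2 → ℂ) (pv : ℂ),
      ((∀ i, ((lamSq w δ n ξ : ℝ) : ℂ) * uv i + symb w δ n ξ i * pv = f ξ i) ∧
        cdot (symb w δ n ξ) uv = 0)
      ↔ (uv = stokesU w δ n ξ (f ξ) ∧ pv = stokesP w δ n ξ (f ξ)) := by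
    intro ξ hξ uv pv
    set Lc : ℂ := ((lamSq w δ n ξ : ℝ) : ℂ) with hLc
    have hLc0 : Lc ≠ 0 := Complex.ofReal_ne_zero.mpr (hlam ξ hξ)
    set lam : Fin 2 → ℂ := symb w δ n ξ with hlamdef
    constructor
    · rintro ⟨h1, h2⟩
      have hsum : cdot lam (f ξ) = Lc * pv := by
        have hstep : ∀ i, (starRingEnd ℂ) (lam i) * f ξ i
            = Lc * ((starRingEnd ℂ) (lam i) * uv i) + ((starRingEnd ℂ) (lam i) * lam i) * pv := by
          intro i
          rw [← h1 i]
          ring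
        rw [cdot]
        rw [Finset.sum_congr rfl fun i _ => hstep i]
        rw [Finset.sum_add_distrib, ← Finset.mul_sum, ← Finset.sum_mul, ← cdot, ← cdot, h2,
          cdot_symb_self, mul_zero, zero_add, ← hLc]
      have hcan : Lc * pv / Lc = pv := mul_div_cancel_left₀ pv hLc0
      have hp : pv = stokesP w δ n ξ (f ξ) := by
        rw [stokesP, ← hlamdef, ← hLc, hsum, hcan]
      refine ⟨?_, hp⟩
      funext i
      rw [stokesU, ← hlamdef, ← hLc, hsum, hcan, ← h1 i]
      field_simp
      ring
    · rintro ⟨rfl, rfl⟩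
      constructor
      · intro i
        rw [stokesU, stokesP, ← hlamdef, ← hLc, ← mul_assoc, mul_inv_cancel₀ hLc0, one_mul]
        ring
      · have hK : (starRingEnd ℂ) (lam 0) * lam 0 + (starRingEnd ℂ) (lam 1) * lam 1 = Lc := by
          have h := cdot_symb_self w δ n ξ
          rwa [cdot, Fin.sum_univ_two, ← hlamdef, ← hLc] at h
        rw [cdot, Fin.sum_univ_two, stokesU, stokesU, ← hlamdef, ← hLc, cdot, Fin.sum_univ_two]
        field_simp
        linear_combination (-((starRingEnd ℂ) (lam 0) * f ξ 0 + (starRingEnd ℂ) (lam 1) * f ξ 1)) * hK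
  refine ⟨fun ξ hξ => ⟨hlam ξ hξ, hiff ξ hξ⟩, ?_⟩
  -- the energy identity
  have henergy : ∀ ξ : Fin 2 → ℤ, ξ ≠ 0 →
      lamSq w δ n ξ * ∑ i, Complex.normSq (stokesU w δ n ξ (f ξ) i)
        + Complex.normSq (stokesP w δ n ξ (f ξ))
      = (lamSq w δ n ξ)⁻¹ * ∑ i, Complex.normSq (f ξ i) := by
    intro ξ hξ
    set L : ℝ := lamSq w δ n ξ with hLdef
    have hL0 : L ≠ 0 := hlam ξ hξ
    set lam : Fin 2 → ℂ := symb w δ n ξ with hlamdef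
    set u : Fin 2 → ℂ := stokesU w δ n ξ (f ξ) with hudef
    set p : ℂ := stokesP w δ n ξ (f ξ) with hpdef
    obtain ⟨h1, h2⟩ := (hiff ξ hξ u p).2 ⟨rfl, rfl⟩
    have hkey : ∑ i, Complex.normSq (f ξ i) = L * L * (∑ i, Complex.normSq (u i))
        + L * Complex.normSq p := by
      have hterm : ∀ i, Complex.normSq (f ξ i)
          = Complex.normSq (((L:ℝ):ℂ) * u i) + Complex.normSq (lam i * p)
            + 2 * ((((L:ℝ):ℂ) * u i) * (starRingEnd ℂ) (lam i * p)).re := by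
        intro i
        rw [← h1 i]
        exact Complex.normSq_add _ _
      rw [Finset.sum_congr rfl fun i _ => hterm i]
      rw [Finset.sum_add_distrib, Finset.sum_add_distrib]
      have e1 : ∑ i, Complex.normSq (((L:ℝ):ℂ) * u i) = L * L * ∑ i, Complex.normSq (u i) := by
        rw [Finset.mul_sum]
        exact Finset.sum_congr rfl fun i _ => by
          rw [Complex.normSq_mul, Complex.normSq_ofReal]
      have e2 : ∑ i, Complex.normSq (lam i * p) = L * Complex.normSq p := by
        have hm : ∀ i, Complex.normSq (lam i * p) = Complex.normSq (lam i) * Complex.normSq p :=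
          fun i => Complex.normSq_mul _ _
        rw [Finset.sum_congr rfl fun i _ => hm i, ← Finset.sum_mul]
        have hsl : (∑ i, Complex.normSq (lam i)) = L := rfl
        rw [hsl]
      have e3 : ∑ i, (2 * ((((L:ℝ):ℂ) * u i) * (starRingEnd ℂ) (lam i * p)).re) = 0 := by
        rw [← Finset.mul_sum, ← Complex.re_sum]
        have : ∑ i, (((L:ℝ):ℂ) * u i) * (starRingEnd ℂ) (lam i * p)
            = ((L:ℝ):ℂ) * (starRingEnd ℂ) p * cdot lam u := by
          rw [cdot, Fin.sum_univ_two, Fin.sum_univ_two]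
          simp only [map_mul]
          ring
        rw [this, h2]
        simp
      rw [e1, e2, e3, add_zero]
    rw [hkey]
    field_simp
  -- the tsum inequality
  have hterm : ∀ ξ : {ξ : Fin 2 → ℤ // ξ ≠ 0},
      lamSq w δ n ξ.1 * ∑ i, Complex.normSq (stokesU w δ n ξ.1 (f ξ.1) i)
        + Complex.normSq (stokesP w δ n ξ.1 (f ξ.1))
      = (lamSq w δ n ξ.1)⁻¹ * ∑ i, Complex.normSq (f ξ.1 i) :=
    fun ξ => henergy ξ.1 ξ.2
  rw [tsum_congr hterm]
  have hnn : 0 ≤ ∑' ξ : {ξ : Fin 2 → ℤ // ξ ≠ 0},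
      (lamSq w δ n ξ.1)⁻¹ * ∑ i, Complex.normSq (f ξ.1 i) := by
    apply tsum_nonneg
    intro ξ
    apply mul_nonneg
    · apply inv_nonneg.2
      exact Finset.sum_nonneg fun i _ => Complex.normSq_nonneg _
    · exact Finset.sum_nonneg fun i _ => Complex.normSq_nonneg _
  linarith

end
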